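/- arXiv:1408.5708 — 4 statements merged into one kernel-verified Lean document; each statement's English description precedes it below -/
import Mathlib

section
/- Let d ≥ 2 and k ≥ 1 be integers and let λ₁ ≥ λ₂ ≥ ⋯ ≥ λ_{d−1} ≥ 0 be integers with Σ_{j=1}^{d−1} λ_j = dk. Working in the d−1 variables x₁,…,x_{d−1}, let m₁,…,m_N be the list of all N = C((d−1)+k−1, k) monomials of degree k. Then d! · [Δ(x) · h_d(m₁,…,m_N)]_{(λ_j + (d−1) − j)_{j=1}^{d−1}} = Σ_{α ⊢ d} D_α · Σ_{π ∈ S_{d−1}} sgn(π) · N_α(k; (λ_j + π(j) − j)_{j=1}^{d−1}), where the inner count N_α is over a×(d−1) matrices, a = ℓ(α). (The left-hand side is d! times the multiplicity of the irreducible representation S^λ W in the plethysm S^d(S^k W).) -/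
open MvPolynomial Finset

noncomputable section

/-- Complete homogeneous symmetric polynomial `h_d` evaluated at the family `y i`, `i ∈ s`:
the sum, over all multisets of size `d` with elements in `s`, of the corresponding products. -/
def hSum {ι : Type*} [DecidableEq ι] {R : Type*} [CommRing R]
    (d : ℕ) (s : Finset ι) (y : ι → R) : R :=
  ∑ t ∈ s.sym d, ((t : Multiset ι).map y).prod

/-- Elementary symmetric polynomial `e_d` evaluated at the family `y i`, `i ∈ s`. -/
def eSum {ι : Type*} [DecidableEq ι] {R : Type*} [CommRing R]
    (d : ℕ) (s : Finset ι) (y : ι → R) : R :=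
  ∑ t ∈ s.powersetCard d, ∏ i ∈ t, y i

/-- The monomial `x^c` in `m` variables. -/
def monom (m : ℕ) (c : Fin m → ℕ) : MvPolynomial (Fin m) ℤ := ∏ j, X j ^ c j

/-- `h_d` applied to the list of all monomials of degree `k` in `m` variables:
the character of `S^d(S^k W)` for `dim W = m`. -/
def charS (d k m : ℕ) : MvPolynomial (Fin m) ℤ :=
  hSum d (Finset.Nat.antidiagonalTuple m k) (monom m)

/-- `e_d` applied to the list of all monomials of degree `k` in `m` variables:
the character of `Λ^d(S^k W)` for `dim W = m`. -/
def charW (d k m : ℕ) : MvPolynomial (Fin m) ℤ :=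
  eSum d (Finset.Nat.antidiagonalTuple m k) (monom m)

/-- `h_k(x_1,…,x_m)`. -/
def hpoly (m k : ℕ) : MvPolynomial (Fin m) ℤ :=
  ∑ c ∈ Finset.Nat.antidiagonalTuple m k, monom m c

/-- `h_k(x_1^r,…,x_m^r)`. -/
def hkPow (m k r : ℕ) : MvPolynomial (Fin m) ℤ :=
  ∑ c ∈ Finset.Nat.antidiagonalTuple m k, ∏ j, X j ^ (r * c j)

/-- The Vandermonde product `Δ(x) = ∏_{i<j} (x_i - x_j)`. -/
def vand (m : ℕ) : MvPolynomial (Fin m) ℤ :=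
  ∏ p ∈ (Finset.univ : Finset (Fin m × Fin m)).filter (fun p => p.1 < p.2),
    (X p.1 - X p.2)

/-- The coefficient of the monomial with exponent vector `e`. -/
def coeffOf {m : ℕ} (e : Fin m → ℕ) (P : MvPolynomial (Fin m) ℤ) : ℤ :=
  MvPolynomial.coeff (Finsupp.equivFunOnFinite.symm e) P

/-- `N_α(k; μ)`: the number of `(α,μ)`-matrices, i.e. of nonnegative integral `a × m`
matrices all of whose row sums are `k` and whose `α`-weighted column sums are `μ`. -/
def Nmat {a m : ℕ} (α : Fin a → ℕ) (k : ℕ) (μ : Fin m → ℤ) : ℕ :=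
  Set.ncard {M : Fin a → Fin m → ℕ |
    (∀ i, ∑ j, M i j = k) ∧ ∀ j, ∑ i, (α i : ℤ) * (M i j : ℤ) = μ j}

/-- `N_α(k; μ)` for `α` given as a list. -/
def NmatL (αs : List ℕ) {m : ℕ} (k : ℕ) (μ : Fin m → ℤ) : ℕ :=
  Nmat (fun i : Fin αs.length => αs.get i) k μ

/-- `D_ρ`: the number of permutations in `S_d` of cycle type `ρ` (a partition of `d`);
Mathlib's `cycleType` records only the cycles of length at least 2. -/
def Dnum (d : ℕ) (ρ : Nat.Partition d) : ℕ :=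
  ((Finset.univ : Finset (Equiv.Perm (Fin d))).filter
    (fun σ => σ.cycleType = ρ.parts.filter (fun r => 2 ≤ r))).card

/-!
Expanding the Vandermonde determinant, the coefficient of `x^(λ+δ)` in `Δ · f` is the alternating
sum `∑_π sgn π · [f]_(λ+π-id)`. The cycle index of `S_d` (Burnside's lemma weighted by monomials,
for `S_d` permuting `d`-tuples of degree-`k` monomials) gives `d! · h_d(y) = ∑_σ ∏_c p_|c|(y)` over
the cycles `c` of `σ`, fixed points included, and the power sum `p_r` of all degree-`k` monomials is
`h_k(x^r)`. The coefficient of `x^μ` in `∏_i h_k(x^(α_i))` counts the `(α, μ)`-matrices (row `i`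
records the exponent of the monomial chosen in the `i`-th factor), and grouping the permutations
by cycle type produces the weights `D_α`.
-/

open Equiv

theorem monom_eq_monomial {m : ℕ} (c : Fin m → ℕ) :
    monom m c = monomial (Finsupp.equivFunOnFinite.symm c) 1 := by
  rw [monomial_eq, C_1, one_mul, Finsupp.prod_fintype _ _ (fun _ => pow_zero _)]
  rfl

theorem prod_monom {m : ℕ} {ι : Type*} (s : Finset ι) (c : ι → Fin m → ℕ) :
    ∏ i ∈ s, monom m (c i) = monom m (fun j => ∑ i ∈ s, c i j) := by
  simp only [monom, ← Finset.prod_pow_eq_pow_sum]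
  exact Finset.prod_comm

theorem coeffOf_sum {m : ℕ} {ι : Type*} (e : Fin m → ℕ) (s : Finset ι)
    (P : ι → MvPolynomial (Fin m) ℤ) : coeffOf e (∑ i ∈ s, P i) = ∑ i ∈ s, coeffOf e (P i) :=
  coeff_sum _ _ _

theorem coeffOf_nsmul {m : ℕ} (e : Fin m → ℕ) (n : ℕ) (P : MvPolynomial (Fin m) ℤ) :
    coeffOf e (n • P) = n * coeffOf e P := by
  rw [coeffOf, coeff_smul, nsmul_eq_mul]
  rfl

theorem coeffOf_monom {m : ℕ} (e c : Fin m → ℕ) :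
    coeffOf e (monom m c) = if c = e then 1 else 0 := by
  simp [coeffOf, monom_eq_monomial, coeff_monomial]

theorem vand_eq_det_vandermonde (m : ℕ) :
    vand m = (Matrix.vandermonde fun i : Fin m => (X i.rev : MvPolynomial (Fin m) ℤ)).det := by
  rw [Matrix.det_vandermonde, vand, Finset.prod_filter, Fintype.prod_prod_type]
  simp only [← Finset.filter_lt_eq_Ioi, Finset.prod_filter]
  rw [← Equiv.prod_comp Fin.revPerm, Finset.prod_comm, ← Equiv.prod_comp Fin.revPerm]
  simp [Fin.rev_lt_rev]

theorem vand_eq_sum_sign_monom (m : ℕ) :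
    vand m = ∑ τ : Perm (Fin m), (Perm.sign τ : ℤ) • monom m (fun j => m - 1 - τ j) := by
  rw [vand_eq_det_vandermonde, ← Matrix.det_submatrix_equiv_self Fin.revPerm, Matrix.det_apply,
    ← Equiv.sum_comp (Equiv.inv (Perm (Fin m)))]
  refine Fintype.sum_congr _ _ fun σ => ?_
  rw [Equiv.inv_apply, Perm.sign_inv, monom, ← Equiv.prod_comp σ]
  congr 1
  refine Fintype.prod_congr _ _ fun i => ?_
  simp only [Perm.coe_inv, symm_apply_apply, Matrix.submatrix_apply, Fin.revPerm_apply,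
    Matrix.vandermonde_apply, Fin.rev_rev, Fin.val_rev]
  congr 1
  omega

theorem Nmat_eq_zero_of_neg {a m : ℕ} (α : Fin a → ℕ) (k : ℕ) {μ : Fin m → ℤ} {j : Fin m}
    (hj : μ j < 0) : Nmat α k μ = 0 := by
  suffices h : ∀ M : Fin a → Fin m → ℕ, ∑ i, (α i : ℤ) * M i j ≠ μ j by
    refine (congrArg Set.ncard (Set.eq_empty_of_forall_notMem ?_)).trans (Set.ncard_empty _)
    exact fun M hM => h M (hM.2 j)
  intro M hM
  exact hj.not_ge (hM ▸ by positivity)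

theorem Nmat_eq_coeffOf {a m : ℕ} (α : Fin a → ℕ) (k : ℕ) (ν : Fin m → ℕ) :
    (Nmat α k (fun j => (ν j : ℤ)) : ℤ) = coeffOf ν (∏ i, hkPow m k (α i)) := by
  have hterm : ∀ M : Fin a → Fin m → ℕ, ∏ i, ∏ j, (X j : MvPolynomial (Fin m) ℤ) ^ (α i * M i j)
      = monom m (fun j => ∑ i, α i * M i j) := fun M => by
    rw [← prod_monom]
    rfl
  simp only [hkPow, Finset.prod_univ_sum, hterm, coeffOf_sum, coeffOf_monom, Finset.sum_boole]
  rw [Nmat, ← Set.ncard_coe_finset]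
  congr 2
  ext M
  simp only [Set.mem_ofPred_eq, Finset.coe_filter, Fintype.mem_piFinset,
    Finset.Nat.mem_antidiagonalTuple, funext_iff]
  exact_mod_cast Iff.rfl

/-- When `c ≰ e` both sides vanish, the right one because some entry of `e - c` is negative. -/
theorem coeffOf_monom_mul_prod_hkPow {a m : ℕ} (α : Fin a → ℕ) (k : ℕ) (e c : Fin m → ℕ) :
    coeffOf e (monom m c * ∏ i, hkPow m k (α i)) = Nmat α k (fun j => (e j : ℤ) - c j) := by
  rw [coeffOf, monom_eq_monomial, coeff_monomial_mul', one_mul]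
  split_ifs with hle
  · rw [show (fun j => (e j : ℤ) - c j) = fun j => (((e - c) j : ℕ) : ℤ) by
      funext j; simp [Nat.cast_sub (show c j ≤ e j from hle j)], Nmat_eq_coeffOf, coeffOf]
    congr 1
    ext j
    simp
  · obtain ⟨j, hj⟩ : ∃ j, e j < c j := by
      by_contra! h
      exact hle fun j => h j
    rw [Nmat_eq_zero_of_neg α k (j := j) (by omega), Nat.cast_zero]

theorem coeffOf_vand_mul_prod_hkPow {a m : ℕ} (α : Fin a → ℕ) (k : ℕ) (μ : Fin m → ℕ) :
    coeffOf (fun j => μ j + (m - 1 - j)) (vand m * ∏ i, hkPow m k (α i)) =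
      ∑ τ : Perm (Fin m), (Perm.sign τ : ℤ) *
        Nmat α k (fun j => (μ j : ℤ) + (τ j : ℕ) - (j : ℕ)) := by
  rw [vand_eq_sum_sign_monom, Finset.sum_mul, coeffOf_sum]
  refine Fintype.sum_congr _ _ fun τ => ?_
  rw [smul_mul_assoc, coeffOf, coeff_smul, ← coeffOf, coeffOf_monom_mul_prod_hkPow, smul_eq_mul]
  congr 3
  funext j
  have := (τ j).isLt
  omega

namespace Equiv.Perm

theorem SameCycle.apply_eq_of_comp_eq_self {α ι : Type*} {σ : Perm α} {g : α → ι}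
    (hg : g ∘ σ = g) {x y : α} (h : σ.SameCycle x y) : g x = g y := by
  have hinv : g ∘ ⇑σ⁻¹ = g := funext fun x => by simpa using (congrFun hg (σ⁻¹ x)).symm
  have hpow : ∀ n : ℤ, g ∘ ⇑(σ ^ n) = g := fun n => by
    induction n using Int.induction_on with
    | zero => rfl
    | succ n ih => rw [zpow_add_one, coe_mul, ← Function.comp_assoc, ih, hg]
    | pred n ih => rw [zpow_sub_one, coe_mul, ← Function.comp_assoc, ih, hinv]
  obtain ⟨n, rfl⟩ := h
  exact (congrFun (hpow n) x).symm

variable {α : Type*} [Fintype α] [DecidableEq α]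

instance (σ : Perm α) : DecidableRel (SameCycle.setoid σ).r :=
  inferInstanceAs (DecidableRel σ.SameCycle)

def cycleClassCard (σ : Perm α) (ω : Quotient (SameCycle.setoid σ)) : ℕ :=
  #{x | Quotient.mk _ x = ω}

def cycleOfClass (σ : Perm α) : Quotient (SameCycle.setoid σ) → Perm α :=
  Quotient.lift σ.cycleOf fun _ _ h => h.cycleOf_eq

theorem cycleOfClass_mk_mem_cycleFactorsFinset_iff {σ : Perm α} {x : α} :
    cycleOfClass σ (Quotient.mk _ x) ∈ σ.cycleFactorsFinset ↔ x ∈ σ.support :=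
  cycleOf_mem_cycleFactorsFinset_iff

theorem cycleClassCard_mk_of_mem_support {σ : Perm α} {x : α} (hx : x ∈ σ.support) :
    cycleClassCard σ (Quotient.mk _ x) = #(σ.cycleOf x).support := by
  unfold cycleClassCard
  congr 1
  ext y
  simp only [mem_filter, mem_univ, true_and, Quotient.eq, mem_support_cycleOf_iff, hx,
    and_true]
  exact ⟨SameCycle.symm, SameCycle.symm⟩

theorem cycleClassCard_mk_of_notMem_support {σ : Perm α} {x : α} (hx : x ∉ σ.support) :
    cycleClassCard σ (Quotient.mk _ x) = 1 := by
  rw [cycleClassCard, Finset.card_eq_one]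
  refine ⟨x, Finset.ext fun y => ?_⟩
  simp only [mem_filter, mem_univ, true_and, Quotient.eq, mem_singleton]
  refine ⟨fun h => h.eq_of_right (notMem_support.mp hx), fun h => h ▸ SameCycle.refl _ _⟩

theorem sum_cycleClassCard (σ : Perm α) : ∑ ω, cycleClassCard σ ω = Fintype.card α :=
  (card_eq_sum_card_fiberwise fun _ _ => mem_univ _).symm

theorem map_cycleClassCard_filter_mem_cycleFactorsFinset (σ : Perm α) :
    (univ.filter fun ω => cycleOfClass σ ω ∈ σ.cycleFactorsFinset).val.map (cycleClassCard σ)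
      = σ.cycleType := by
  set s := univ.filter fun ω => cycleOfClass σ ω ∈ σ.cycleFactorsFinset
  have hinj : Set.InjOn (cycleOfClass σ) s := by
    intro ω₁ h₁ ω₂ _ h
    induction ω₁ using Quotient.ind with | _ x₁ => ?_
    induction ω₂ using Quotient.ind with | _ x₂ => ?_
    rw [mem_coe, mem_filter, cycleOfClass_mk_mem_cycleFactorsFinset_iff] at h₁
    change σ.cycleOf x₁ = σ.cycleOf x₂ at h
    have : x₁ ∈ (σ.cycleOf x₂).support := h ▸ mem_support_cycleOf_iff.mpr ⟨.refl _ _, h₁.2⟩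
    exact Quotient.sound (mem_support_cycleOf_iff.mp this).1.symm
  have himage : s.image (cycleOfClass σ) = σ.cycleFactorsFinset := by
    refine subset_antisymm (fun c hc => ?_) fun c hc => ?_
    · obtain ⟨ω, hω, rfl⟩ := mem_image.mp hc
      exact (mem_filter.mp hω).2
    · obtain ⟨x, hx⟩ := (mem_cycleFactorsFinset_iff.mp hc).1.nonempty_support
      have hc' : c = σ.cycleOf x := cycle_is_cycleOf hx hc
      refine mem_image.mpr ⟨Quotient.mk _ x, mem_filter.mpr ⟨mem_univ _, ?_⟩, hc'.symm⟩
      exact (hc' ▸ hc : σ.cycleOf x ∈ _)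
  rw [cycleType_def, ← himage, image_val_of_injOn hinj, Multiset.map_map]
  refine Multiset.map_congr rfl fun ω hω => ?_
  induction ω using Quotient.ind with | _ x => ?_
  exact cycleClassCard_mk_of_mem_support
    (cycleOfClass_mk_mem_cycleFactorsFinset_iff.mp (mem_filter.mp hω).2)

theorem map_cycleClassCard_univ (σ : Perm α) :
    univ.val.map (cycleClassCard σ) = σ.partition.parts := by
  set p := fun ω => cycleOfClass σ ω ∈ σ.cycleFactorsFinset
  have hfixed : ∀ ω ∈ univ.val.filter (¬ p ·), cycleClassCard σ ω = 1 := by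
    intro ω hω
    induction ω using Quotient.ind with | _ x => ?_
    refine cycleClassCard_mk_of_notMem_support ?_
    exact mt cycleOfClass_mk_mem_cycleFactorsFinset_iff.mpr (Multiset.mem_filter.mp hω).2
  have hsum := sum_cycleClassCard σ
  rw [Finset.sum_eq_multiset_sum, ← Multiset.filter_add_not p univ.val, Multiset.map_add,
    Multiset.sum_add] at hsum
  rw [parts_partition, ← Multiset.filter_add_not p univ.val, Multiset.map_add]
  have hB : (univ.val.filter (¬ p ·)).map (cycleClassCard σ) =
      Multiset.replicate ((univ.val.filter (¬ p ·)).map (cycleClassCard σ)).card 1 :=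
    Multiset.eq_replicate_card.mpr fun _ h =>
      let ⟨ω, hω, hω'⟩ := Multiset.mem_map.mp h
      hω' ▸ hfixed ω hω
  have hA := map_cycleClassCard_filter_mem_cycleFactorsFinset σ
  rw [filter_val] at hA
  rw [hA, hB] at hsum ⊢
  rw [Multiset.sum_replicate, smul_eq_mul, mul_one, sum_cycleType] at hsum
  rw [← hsum, Nat.add_sub_cancel_left]

theorem sum_prod_comp_eq_self_eq_prod_parts {ι R : Type*} [DecidableEq ι] [CommSemiring R]
    (s : Finset ι) (y : ι → R) (σ : Perm α) :
    ∑ g ∈ (Fintype.piFinset fun _ : α => s).filter (fun g => g ∘ σ = g), ∏ i, y (g i)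
      = (σ.partition.parts.map fun r => ∑ v ∈ s, y v ^ r).prod := by
  have hmk : ∀ x, Quotient.mk (SameCycle.setoid σ) x = Quotient.mk _ (σ x) :=
    fun x => Quotient.sound (sameCycle_apply_right.mpr (.refl _ _))
  have hconst : ∀ g ∈ (Fintype.piFinset fun _ : α => s).filter (fun g => g ∘ σ = g),
      ∀ x, g (Quotient.mk (SameCycle.setoid σ) x).out = g x := fun g hg x =>
    SameCycle.apply_eq_of_comp_eq_self (mem_filter.mp hg).2
      (Quotient.mk_out (s := SameCycle.setoid σ) x)
  rw [← map_cycleClassCard_univ, Multiset.map_map, ← prod_eq_multiset_prod]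
  simp only [Function.comp_apply]
  rw [prod_univ_sum]
  refine sum_nbij' (fun g ω => g ω.out) (fun G => G ∘ Quotient.mk _) ?_ ?_ ?_ ?_ ?_
  · exact fun g hg => Fintype.mem_piFinset.mpr fun ω =>
      Fintype.mem_piFinset.mp (mem_filter.mp hg).1 _
  · exact fun G hG => mem_filter.mpr ⟨Fintype.mem_piFinset.mpr fun x =>
      Fintype.mem_piFinset.mp hG _, funext fun x => congrArg G (hmk x).symm⟩
  · exact fun g hg => funext (hconst g hg)
  · intro G _
    funext ω
    simp
  · intro g hg
    calc ∏ i, y (g i) = ∏ i, y (g (Quotient.mk (SameCycle.setoid σ) i).out) :=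
          Fintype.prod_congr _ _ fun x => congrArg y (hconst g hg x).symm
      _ = _ := by
          rw [Finset.prod_comp (fun ω : Quotient (SameCycle.setoid σ) => y (g ω.out)),
            image_univ_of_surjective Quotient.mk_surjective]
          rfl

end Equiv.Perm

section CycleIndex

variable {α ι : Type*} [Fintype α] [DecidableEq ι]

theorem exists_perm_eq_comp_of_map_univ_eq {g g₀ : α → ι}
    (h : univ.val.map g = univ.val.map g₀) : ∃ τ : Perm α, g = g₀ ∘ τ := by
  have hcard : ∀ v, Fintype.card {i // g i = v} = Fintype.card {i // g₀ i = v} := by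
    intro v
    have := congrArg (Multiset.countP (· = v)) h
    simp only [Multiset.countP_map] at this
    simpa [Fintype.card_subtype, card_def] using this
  refine ⟨(Equiv.sigmaFiberEquiv g).symm.trans
    ((Equiv.sigmaCongrRight fun v => Fintype.equivOfCardEq (hcard v)).trans
      (Equiv.sigmaFiberEquiv g₀)), funext fun i => ?_⟩
  exact (Fintype.equivOfCardEq (hcard (g i)) ⟨i, rfl⟩).2.symm

variable [DecidableEq α]

theorem card_comp_eq_self_eq_card_comp_eq (g₀ : α → ι) (τ₀ : Perm α) :
    #{σ : Perm α | g₀ ∘ τ₀ ∘ σ = g₀ ∘ τ₀} = #{τ : Perm α | g₀ ∘ τ = g₀ ∘ τ₀} :=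
  card_equiv (Equiv.mulLeft τ₀) fun σ => by simp [Perm.coe_mul]

/-- Orbit–stabilizer: the functions with the same multiset of values as `g₀` are the `g₀ ∘ τ`, and
the stabilizer of `g₀ ∘ τ₀` is in bijection with `{τ | g₀ ∘ τ = g₀ ∘ τ₀}`. -/
theorem sum_card_comp_eq_self_of_map_univ_eq (s : Finset ι) {g₀ : α → ι} (hg₀ : ∀ i, g₀ i ∈ s) :
    ∑ g ∈ (Fintype.piFinset fun _ : α => s).filter (univ.val.map · = univ.val.map g₀),
      #{σ : Perm α | g ∘ σ = g} = (Fintype.card α).factorial := by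
  have hterm : ∀ g ∈ (Fintype.piFinset fun _ : α => s).filter (univ.val.map · = univ.val.map g₀),
      #{σ : Perm α | g ∘ σ = g} = #{τ : Perm α | g₀ ∘ τ = g} := by
    intro g hg
    obtain ⟨τ₀, rfl⟩ := exists_perm_eq_comp_of_map_univ_eq (mem_filter.mp hg).2
    exact card_comp_eq_self_eq_card_comp_eq g₀ τ₀
  rw [sum_congr rfl hterm, ← Fintype.card_perm, ← card_univ]
  refine (card_eq_sum_card_fiberwise fun τ _ => ?_).symm
  simp only [coe_filter, Fintype.mem_piFinset, Set.mem_ofPred_eq]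
  refine ⟨fun i => hg₀ _, ?_⟩
  rw [← Multiset.map_map, Multiset.map_univ_val_equiv]

theorem exists_map_univ_eq_of_mem_sym {d : ℕ} {s : Finset ι} {t : Sym ι d} (ht : t ∈ s.sym d) :
    ∃ g₀ : Fin d → ι, (∀ i, g₀ i ∈ s) ∧ univ.val.map g₀ = (t : Multiset ι) := by
  set l := (t : Multiset ι).toList
  have hlen : l.length = d := by simp [l]
  refine ⟨fun i => l.get (i.cast hlen.symm), fun i => mem_sym_iff.mp ht _ ?_, ?_⟩
  · exact Multiset.mem_toList.mp (List.getElem_mem _)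
  · rw [Fin.univ_val_map, ← List.ofFn_congr hlen, List.ofFn_get, Multiset.coe_toList]

theorem factorial_nsmul_hSum {R : Type*} [CommRing R] (d : ℕ) (s : Finset ι) (y : ι → R) :
    d.factorial • hSum d s y =
      ∑ σ : Perm (Fin d), (σ.partition.parts.map fun r => ∑ v ∈ s, y v ^ r).prod := by
  let toSym : (Fin d → ι) → Sym ι d := fun g => ⟨univ.val.map g, by simp⟩
  calc d.factorial • hSum d s y
      = ∑ t ∈ s.sym d, ∑ g ∈ (Fintype.piFinset fun _ => s).filter (toSym · = t),
          #{σ : Perm (Fin d) | g ∘ σ = g} • ∏ i, y (g i) := by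
        rw [hSum, smul_sum]
        refine sum_congr rfl fun t ht => ?_
        obtain ⟨g₀, hg₀s, hg₀⟩ := exists_map_univ_eq_of_mem_sym ht
        have hfiber : ∀ g, toSym g = t ↔ univ.val.map g = univ.val.map g₀ := by
          intro g
          rw [hg₀, ← Sym.coe_inj]
          exact Iff.rfl
        have hprod : ∀ g ∈ (Fintype.piFinset fun _ => s).filter (toSym · = t),
            ∏ i, y (g i) = ((t : Multiset ι).map y).prod := by
          intro g hg
          rw [← (mem_filter.mp hg).2, prod_eq_multiset_prod]
          exact congrArg Multiset.prod (Multiset.map_map y g univ.val).symm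
        rw [sum_congr rfl fun g hg => by rw [hprod g hg], ← sum_smul,
          filter_congr fun g _ => hfiber g, sum_card_comp_eq_self_of_map_univ_eq s hg₀s,
          Fintype.card_fin]
    _ = ∑ g ∈ Fintype.piFinset fun _ => s, #{σ : Perm (Fin d) | g ∘ σ = g} • ∏ i, y (g i) := by
        refine sum_fiberwise_of_maps_to (fun g hg => mem_sym_iff.mpr fun a ha => ?_) _
        obtain ⟨i, -, rfl⟩ := Multiset.mem_map.mp (show a ∈ univ.val.map g from ha)
        exact Fintype.mem_piFinset.mp hg i
    _ = ∑ σ : Perm (Fin d), ∑ g ∈ (Fintype.piFinset fun _ => s).filter (fun g => g ∘ σ = g),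
          ∏ i, y (g i) := by
        simp only [card_filter, sum_smul, ite_smul, one_smul, zero_smul, sum_filter]
        exact sum_comm
    _ = _ := sum_congr rfl fun σ _ => Perm.sum_prod_comp_eq_self_eq_prod_parts s y σ

end CycleIndex

theorem sum_monom_pow_eq_hkPow (m k r : ℕ) :
    ∑ c ∈ Finset.Nat.antidiagonalTuple m k, monom m c ^ r = hkPow m k r := by
  refine sum_congr rfl fun c _ => ?_
  rw [monom, ← prod_pow]
  exact prod_congr rfl fun j _ => by rw [← pow_mul, mul_comm]

theorem factorial_nsmul_charS (d k m : ℕ) :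
    d.factorial • charS d k m = ∑ σ : Perm (Fin d),
      ∏ i : Fin σ.partition.parts.toList.length, hkPow m k (σ.partition.parts.toList.get i) := by
  rw [charS, factorial_nsmul_hSum]
  refine sum_congr rfl fun σ _ => ?_
  simp only [sum_monom_pow_eq_hkPow]
  rw [← Multiset.prod_map_toList, ← Fin.prod_univ_fun_getElem]
  rfl

theorem Nat.Partition.parts_eq_filter_add_replicate {n : ℕ} (ρ : n.Partition) :
    ρ.parts = ρ.parts.filter (2 ≤ ·) + Multiset.replicate (n - (ρ.parts.filter (2 ≤ ·)).sum) 1 := by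
  have hones : ρ.parts.filter (¬ 2 ≤ ·) = Multiset.replicate (ρ.parts.filter (¬ 2 ≤ ·)).card 1 :=
    Multiset.eq_replicate_card.mpr fun x hx => by
      have := ρ.parts_pos (Multiset.mem_filter.mp hx).1
      have := (Multiset.mem_filter.mp hx).2
      omega
  have hsum := ρ.parts_sum
  rw [← Multiset.filter_add_not (2 ≤ ·) ρ.parts, Multiset.sum_add, hones, Multiset.sum_replicate,
    smul_eq_mul, mul_one] at hsum
  conv_lhs => rw [← Multiset.filter_add_not (2 ≤ ·) ρ.parts, hones]
  congr 2
  omega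

theorem Equiv.Perm.parts_partition_eq_iff {d : ℕ} (σ : Perm (Fin d)) (ρ : d.Partition) :
    σ.partition.parts = ρ.parts ↔ σ.cycleType = ρ.parts.filter (2 ≤ ·) := by
  refine ⟨fun h => h ▸ Perm.filter_parts_partition_eq_cycleType.symm, fun h => ?_⟩
  rw [Perm.parts_partition, ρ.parts_eq_filter_add_replicate, ← h, Perm.sum_cycleType,
    Fintype.card_fin]

theorem sum_perm_eq_sum_partition {M : Type*} [AddCommMonoid M] (d : ℕ) (F : Multiset ℕ → M) :
    ∑ σ : Perm (Fin d), F σ.partition.parts = ∑ ρ : d.Partition, Dnum d ρ • F ρ.parts := by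
  let p : Perm (Fin d) → d.Partition := fun σ =>
    ⟨σ.partition.parts, σ.partition.parts_pos, by simpa using σ.partition.parts_sum⟩
  rw [← sum_fiberwise univ p]
  refine sum_congr rfl fun ρ _ => ?_
  rw [sum_congr rfl fun σ hσ => congrArg F (congrArg Nat.Partition.parts (mem_filter.mp hσ).2),
    sum_const, Dnum]
  congr 2
  exact filter_congr fun σ _ => (Nat.Partition.ext_iff).trans (σ.parts_partition_eq_iff ρ)

theorem plethysm_sym_formula_general (d k : ℕ) (lam : ℕ → ℕ) :
    (d.factorial : ℤ) *
        coeffOf (fun j : Fin (d - 1) => lam (j : ℕ) + (d - 2 - (j : ℕ)))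
          (vand (d - 1) * charS d k (d - 1))
      = ∑ α : Nat.Partition d, (Dnum d α : ℤ) *
          ∑ π : Equiv.Perm (Fin (d - 1)), (Equiv.Perm.sign π : ℤ) *
            (NmatL α.parts.toList k
              (fun j : Fin (d - 1) =>
                (lam (j : ℕ) : ℤ) + ((π j : ℕ) : ℤ) - ((j : ℕ) : ℤ)) : ℤ) := by
  rw [show d - 2 = d - 1 - 1 by omega, ← coeffOf_nsmul, ← mul_smul_comm, factorial_nsmul_charS,
    mul_sum, coeffOf_sum]
  simp only [coeffOf_vand_mul_prod_hkPow]
  refine (sum_perm_eq_sum_partition d fun P => ∑ π : Perm (Fin (d - 1)), (Perm.sign π : ℤ) *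
    (NmatL P.toList k fun j => (lam j : ℤ) + (π j : ℕ) - (j : ℕ) : ℤ)).trans ?_
  simp only [nsmul_eq_mul]

/-- Expansion of `d! ·` (multiplicity of `S^λ` in `S^d(S^k W)`) as a signed sum of
shifted matrix counts over partitions `α ⊢ d` and permutations of `S_{d-1}`. -/
theorem plethysm_sym_formula (d k : ℕ) (hd : 2 ≤ d) (hk : 1 ≤ k)
    (lam : ℕ → ℕ) (hanti : ∀ i j : ℕ, i ≤ j → lam j ≤ lam i)
    (hsupp : ∀ i : ℕ, d - 1 ≤ i → lam i = 0)
    (hsum : ∑ i ∈ Finset.range (d - 1), lam i = d * k) :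
    (d.factorial : ℤ) *
        coeffOf (fun j : Fin (d - 1) => lam (j : ℕ) + (d - 2 - (j : ℕ)))
          (vand (d - 1) * charS d k (d - 1))
      = ∑ α : Nat.Partition d, (Dnum d α : ℤ) *
          ∑ π : Equiv.Perm (Fin (d - 1)), (Equiv.Perm.sign π : ℤ) *
            (NmatL α.parts.toList k
              (fun j : Fin (d - 1) =>
                (lam (j : ℕ) : ℤ) + ((π j : ℕ) : ℤ) - ((j : ℕ) : ℤ)) : ℤ) :=
  plethysm_sym_formula_general d k lam
end
end

section
/- Let d ≥ 1, k ≥ 0 and m ≥ 1 be integers and let m₁,…,m_N be the list of all N = C(m+k−1, k) monomials of degree k in the variables x₁,…,x_m. Then d! · e_d(m₁,…,m_N) = Σ_{α ⊢ d} (−1)^{d−ℓ(α)} D_α · ∏_{i=1}^{ℓ(α)} h_k(x₁^{α_i},…,x_m^{α_i}) as polynomials in x₁,…,x_m. (Equivalently: the character of Λ^d(S^k W) equals Σ_{α⊢d} χ_{(1,…,1)}(α) (D_α/d!) ψ_α ∘ h_k, the case μ = (1,…,1) of the character formula for S^μ(S^k W).) -/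
open MvPolynomial Finset

noncomputable section

set_option linter.unusedSectionVars false

namespace CharWedgeAux

variable {X : Type*} [Fintype X] [DecidableEq X]
variable {ι : Type*} [DecidableEq ι] {R : Type*} [CommRing R]

/-- parts of the cycle partition of `σ`, including fixed points as parts of size 1 -/
def partsM (σ : Equiv.Perm X) : Multiset ℕ :=
  σ.cycleType + Multiset.replicate (Fintype.card X - σ.support.card) 1

/-- Index type for the blocks (orbits) of `σ`: nontrivial cycles plus fixed points. -/
abbrev Blocks (σ : Equiv.Perm X) :=
  ({c // c ∈ σ.cycleFactorsFinset} ⊕ {x : X // σ x = x})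

/-- The block (orbit) corresponding to an index. -/
def blk (σ : Equiv.Perm X) : Blocks σ → Finset X
  | Sum.inl c => (c.1 : Equiv.Perm X).support
  | Sum.inr x => {x.1}

/-- The index of the block containing `x`. -/
def idx (σ : Equiv.Perm X) (x : X) : Blocks σ :=
  if h : σ x = x then Sum.inr ⟨x, h⟩
  else Sum.inl ⟨σ.cycleOf x, Equiv.Perm.cycleOf_mem_cycleFactorsFinset_iff.2 (Equiv.Perm.mem_support.2 h)⟩

theorem mem_blk {σ : Equiv.Perm X} {x : X} {κ : Blocks σ} :
    x ∈ blk σ κ ↔ idx σ x = κ := by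
  constructor
  · rintro hx
    cases κ with
    | inl c =>
      have hxs : x ∈ σ.support :=
        Equiv.Perm.mem_cycleFactorsFinset_support_le c.2 hx
      have hσx : σ x ≠ x := Equiv.Perm.mem_support.1 hxs
      rw [idx, dif_neg hσx]
      congr 1
      exact Subtype.ext (Equiv.Perm.cycle_is_cycleOf hx c.2).symm
    | inr z =>
      have : x = z.1 := by simpa [blk] using hx
      subst this
      rw [idx, dif_pos z.2]
  · rintro rfl
    by_cases h : σ x = x
    · rw [idx, dif_pos h]; simp [blk]
    · rw [idx, dif_neg h]
      simpa [blk] using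
        (Equiv.Perm.mem_support_cycleOf_iff' h).2 (Equiv.Perm.SameCycle.refl σ x)

theorem idx_apply (σ : Equiv.Perm X) (x : X) : idx σ (σ x) = idx σ x := by
  by_cases h : σ x = x
  · rw [h]
  · have h2 : σ (σ x) ≠ σ x := fun hc => h (σ.injective hc)
    rw [idx, idx, dif_neg h, dif_neg h2]
    congr 1
    exact Subtype.ext (Equiv.Perm.cycleOf_self_apply σ x)

theorem idx_surj (σ : Equiv.Perm X) (κ : Blocks σ) : ∃ x, idx σ x = κ := by
  suffices h : ∃ x, x ∈ blk σ κ by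
    obtain ⟨x, hx⟩ := h; exact ⟨x, mem_blk.1 hx⟩
  cases κ with
  | inl c =>
    obtain ⟨x, hx, -⟩ := (Equiv.Perm.mem_cycleFactorsFinset_iff.1 c.2).1
    exact ⟨x, Equiv.Perm.mem_support.2 hx⟩
  | inr z => exact ⟨z.1, by simp [blk]⟩

theorem invar_pow {σ : Equiv.Perm X} {f : X → ι} (hf : ∀ x, f (σ x) = f x) :
    ∀ (n : ℕ) (x : X), f ((σ ^ n) x) = f x := by
  intro n
  induction n with
  | zero => simp
  | succ n ih =>
    intro x
    rw [pow_succ, Equiv.Perm.mul_apply, ih (σ x), hf]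

theorem invar_const_on_blk {σ : Equiv.Perm X} {f : X → ι} (hf : ∀ x, f (σ x) = f x)
    {κ : Blocks σ} {x x' : X} (hx : x ∈ blk σ κ) (hx' : x' ∈ blk σ κ) :
    f x = f x' := by
  cases κ with
  | inl c =>
    have hc : (c.1 : Equiv.Perm X) = σ.cycleOf x := Equiv.Perm.cycle_is_cycleOf hx c.2
    have hsc : σ.SameCycle x x' := by
      rw [blk, hc] at hx'
      exact (Equiv.Perm.mem_support_cycleOf_iff.1 hx').1
    obtain ⟨i, -, hi⟩ := hsc.exists_pow_eq'
    rw [← hi, invar_pow hf]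
  | inr z =>
    have h1 : x = z.1 := by simpa [blk] using hx
    have h2 : x' = z.1 := by simpa [blk] using hx'
    rw [h1, h2]

theorem card_fixed (σ : Equiv.Perm X) :
    Fintype.card {x : X // σ x = x} = Fintype.card X - σ.support.card := by
  have h1 : Fintype.card {x : X // σ x = x}
      = (Finset.univ.filter (fun x => σ x = x)).card := Fintype.card_subtype _
  have h2 : Finset.univ.filter (fun x => ¬ σ x = x) = σ.support := by
    ext x; simp [Equiv.Perm.mem_support]
  have h3 := Finset.card_filter_add_card_filter_not
    (s := (Finset.univ : Finset X)) (p := fun x => σ x = x)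
  rw [h2] at h3
  have h4 : σ.support.card ≤ Fintype.card X := Finset.card_le_univ _
  rw [h1]
  simp only [Finset.card_univ] at h3
  omega

theorem prod_partsM (σ : Equiv.Perm X) (F : ℕ → R) :
    ((partsM σ).map F).prod = ∏ κ : Blocks σ, F (blk σ κ).card := by
  rw [Fintype.prod_sum_type]
  simp only [blk, Finset.card_singleton]
  rw [partsM, Multiset.map_add, Multiset.prod_add]
  congr 1
  · rw [Equiv.Perm.cycleType_def, Multiset.map_map]
    rw [Finset.prod_coe_sort σ.cycleFactorsFinset (fun c => F c.support.card)]
    rfl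
  · rw [Multiset.map_replicate, Multiset.prod_replicate]
    rw [Finset.prod_const, Finset.card_univ, card_fixed]

theorem blk_eq_filter (σ : Equiv.Perm X) (κ : Blocks σ) :
    blk σ κ = Finset.univ.filter (fun x => idx σ x = κ) := by
  ext x; simp [mem_blk]

/-- Expansion of the product of power sums over the parts of `σ` as a sum over
`σ`-invariant functions. -/
theorem prod_parts_eq_sum (σ : Equiv.Perm X) (s : Finset ι) (y : ι → R) :
    ((partsM σ).map (fun r => ∑ i ∈ s, y i ^ r)).prod
      = ∑ f ∈ Fintype.piFinset (fun _ : X => s),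
          (if ∀ x, f (σ x) = f x then ∏ x, y (f x) else 0) := by
  classical
  rw [prod_partsM, Finset.prod_univ_sum, ← Finset.sum_filter]
  have key : ∀ g : Blocks σ → ι,
      ∏ κ : Blocks σ, y (g κ) ^ (blk σ κ).card = ∏ x : X, y (g (idx σ x)) := by
    intro g
    rw [← Finset.prod_fiberwise Finset.univ (idx σ) (fun x => y (g (idx σ x)))]
    refine Finset.prod_congr rfl fun κ _ => ?_
    calc y (g κ) ^ (blk σ κ).card
        = ∏ _x ∈ blk σ κ, y (g κ) := by rw [Finset.prod_const]
      _ = ∏ x ∈ Finset.univ.filter (fun x => idx σ x = κ), y (g (idx σ x)) := by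
          rw [blk_eq_filter]
          exact Finset.prod_congr rfl fun x hx => by rw [(Finset.mem_filter.1 hx).2]
  refine Finset.sum_bij (fun g _ => g ∘ idx σ) ?_ ?_ ?_ ?_
  · intro g hg
    rw [Finset.mem_filter]
    refine ⟨Fintype.mem_piFinset.2 fun x => (Fintype.mem_piFinset.1 hg) (idx σ x), ?_⟩
    intro x
    simp only [Function.comp_apply, idx_apply]
  · intro g₁ h₁ g₂ h₂ h
    funext κ
    obtain ⟨x, rfl⟩ := idx_surj σ κ
    exact congrFun h x
  · intro f hf
    rw [Finset.mem_filter] at hf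
    obtain ⟨hf1, hf2⟩ := hf
    refine ⟨fun κ => f ((idx_surj σ κ).choose), ?_, ?_⟩
    · exact Fintype.mem_piFinset.2 fun κ => (Fintype.mem_piFinset.1 hf1) _
    · funext x
      have hc : idx σ ((idx_surj σ (idx σ x)).choose) = idx σ x :=
        (idx_surj σ (idx σ x)).choose_spec
      exact invar_const_on_blk hf2 (mem_blk.2 hc) (mem_blk.2 rfl)
  · intro g hg
    exact key g

/-- Sum of signs over the permutations fixing `f`. -/
theorem sign_sum (f : X → ι) :
    ∑ σ ∈ (Finset.univ : Finset (Equiv.Perm X)).filter (fun σ => ∀ x, f (σ x) = f x),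
      ((Equiv.Perm.sign σ : ℤ) : R)
      = if Function.Injective f then 1 else 0 := by
  by_cases hinj : Function.Injective f
  · rw [if_pos hinj]
    have : (Finset.univ : Finset (Equiv.Perm X)).filter (fun σ => ∀ x, f (σ x) = f x)
        = {1} := by
      ext σ
      simp only [Finset.mem_filter, Finset.mem_univ, true_and, Finset.mem_singleton]
      constructor
      · intro h
        exact Equiv.ext fun x => hinj (h x)
      · rintro rfl; simp
    rw [this, Finset.sum_singleton]
    simp
  · rw [if_neg hinj]
    obtain ⟨a, b, hab, hne⟩ := Function.not_injective_iff.1 hinj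
    have hfswap : ∀ z, f (Equiv.swap a b z) = f z := by
      intro z
      rcases eq_or_ne z a with rfl | hza
      · rw [Equiv.swap_apply_left, hab]
      rcases eq_or_ne z b with rfl | hzb
      · rw [Equiv.swap_apply_right, hab]
      · rw [Equiv.swap_apply_of_ne_of_ne hza hzb]
    refine Finset.sum_involution (fun σ _ => Equiv.swap a b * σ) ?_ ?_ ?_ ?_
    · intro σ hσ
      have : Equiv.Perm.sign (Equiv.swap a b * σ) = - Equiv.Perm.sign σ := by
        rw [Equiv.Perm.sign_mul, Equiv.Perm.sign_swap hne, neg_one_mul]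
      rw [this]
      push_cast
      ring
    · intro σ hσ hne0 hcontra
      apply hne
      apply Equiv.swap_eq_one_iff.1
      have h1 : Equiv.swap a b * σ = 1 * σ := by rw [one_mul]; exact hcontra
      exact mul_right_cancel h1
    · intro σ hσ
      simp only [Finset.mem_filter, Finset.mem_univ, true_and] at hσ ⊢
      intro x
      rw [Equiv.Perm.mul_apply, hfswap, hσ]
    · intro σ hσ
      show Equiv.swap a b * (Equiv.swap a b * σ) = σ
      rw [← mul_assoc, Equiv.swap_mul_self, one_mul]

/-- Counting injective functions: the sum over injective `f : X → s` of `∏ y (f x)`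
is `(card X)!` times the elementary symmetric sum. -/
theorem inj_sum (s : Finset ι) (y : ι → R) :
    ∑ f ∈ Fintype.piFinset (fun _ : X => s),
        (if Function.Injective f then ∏ x, y (f x) else 0)
      = (Fintype.card X).factorial
          * ∑ t ∈ s.powersetCard (Fintype.card X), ∏ i ∈ t, y i := by
  classical
  rw [← Finset.sum_filter]
  set A := (Fintype.piFinset (fun _ : X => s)).filter (fun f => Function.Injective f) with hA
  have hmaps : ∀ f ∈ A, Finset.univ.image f ∈ s.powersetCard (Fintype.card X) := by
    intro f hf
    rw [hA, Finset.mem_filter] at hf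
    rw [Finset.mem_powersetCard]
    constructor
    · intro i hi
      obtain ⟨x, -, rfl⟩ := Finset.mem_image.1 hi
      exact Fintype.mem_piFinset.1 hf.1 x
    · rw [Finset.card_image_of_injective _ hf.2, Finset.card_univ]
  rw [← Finset.sum_fiberwise_of_maps_to hmaps (fun f => ∏ x, y (f x))]
  rw [Finset.mul_sum]
  refine Finset.sum_congr rfl fun t ht => ?_
  obtain ⟨hts, htc⟩ := Finset.mem_powersetCard.1 ht
  have hterm : ∀ f ∈ A.filter (fun f => Finset.univ.image f = t),
      (∏ x, y (f x)) = ∏ i ∈ t, y i := by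
    intro f hf
    rw [Finset.mem_filter, hA, Finset.mem_filter] at hf
    obtain ⟨⟨-, hinj⟩, him⟩ := hf
    rw [← him, Finset.prod_image (fun x _ x' _ h => hinj h)]
  rw [Finset.sum_congr rfl hterm, Finset.sum_const]
  have hcardt : Fintype.card X = Fintype.card ↥t := by
    rw [Fintype.card_coe, htc]
  have hinj2 : Function.Injective (fun e : X ≃ ↥t => fun x => ((e x : ι))) := by
    intro e e' h
    exact Equiv.ext fun x => Subtype.ext (congrFun h x)
  have him : A.filter (fun f => Finset.univ.image f = t)
      = Finset.image (fun e : X ≃ ↥t => fun x => ((e x : ι))) Finset.univ := by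
    ext f
    simp only [Finset.mem_image, Finset.mem_univ, true_and, Finset.mem_filter, hA,
      Fintype.mem_piFinset]
    constructor
    · rintro ⟨⟨hmem, hinj⟩, himg⟩
      have hft : ∀ x, f x ∈ t := fun x => by
        rw [← himg]; exact Finset.mem_image_of_mem f (Finset.mem_univ x)
      have hbij : Function.Bijective (fun x => (⟨f x, hft x⟩ : ↥t)) := by
        rw [Fintype.bijective_iff_injective_and_card]
        refine ⟨fun x x' h => hinj (congrArg Subtype.val h), ?_⟩
        rw [Fintype.card_coe, htc]
      exact ⟨Equiv.ofBijective _ hbij, rfl⟩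
    · rintro ⟨e, rfl⟩
      have hinje : Function.Injective (fun x => ((e x : ι))) :=
        fun x x' h => e.injective (Subtype.ext h)
      refine ⟨⟨fun x => hts (e x).2, hinje⟩, ?_⟩
      apply Finset.eq_of_subset_of_card_le
      · intro i hi
        obtain ⟨x, -, rfl⟩ := Finset.mem_image.1 hi
        exact (e x).2
      · rw [Finset.card_image_of_injective _ hinje, Finset.card_univ, htc]
  rw [him, Finset.card_image_of_injective _ hinj2, Finset.card_univ,
    Fintype.card_equiv (Fintype.equivOfCardEq hcardt), nsmul_eq_mul]

/-- Main general identity: the signed sum over permutations of products of power sums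
over cycle-partition parts equals `(card X)!` times the elementary symmetric sum. -/
theorem perm_sum (s : Finset ι) (y : ι → R) :
    ∑ σ : Equiv.Perm X, ((Equiv.Perm.sign σ : ℤ) : R)
        * ((partsM σ).map (fun r => ∑ i ∈ s, y i ^ r)).prod
      = (Fintype.card X).factorial
          * ∑ t ∈ s.powersetCard (Fintype.card X), ∏ i ∈ t, y i := by
  classical
  have step1 : ∑ σ : Equiv.Perm X, ((Equiv.Perm.sign σ : ℤ) : R)
        * ((partsM σ).map (fun r => ∑ i ∈ s, y i ^ r)).prod
      = ∑ σ : Equiv.Perm X, ∑ f ∈ Fintype.piFinset (fun _ : X => s),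
          (if ∀ x, f (σ x) = f x then ((Equiv.Perm.sign σ : ℤ) : R) * ∏ x, y (f x)
           else 0) := by
    refine Finset.sum_congr rfl fun σ _ => ?_
    rw [prod_parts_eq_sum, Finset.mul_sum]
    exact Finset.sum_congr rfl fun f _ => by rw [mul_ite, mul_zero]
  rw [step1, Finset.sum_comm, ← inj_sum s y]
  refine Finset.sum_congr rfl fun f _ => ?_
  have : ∑ σ : Equiv.Perm X,
      (if ∀ x, f (σ x) = f x then ((Equiv.Perm.sign σ : ℤ) : R) * ∏ x, y (f x) else 0)
      = (∑ σ ∈ (Finset.univ : Finset (Equiv.Perm X)).filter (fun σ => ∀ x, f (σ x) = f x),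
          ((Equiv.Perm.sign σ : ℤ) : R)) * ∏ x, y (f x) := by
    rw [Finset.sum_mul, Finset.sum_filter]
  rw [this, sign_sum]
  by_cases h : Function.Injective f <;> simp [h]
end CharWedgeAux

section Assembly
open CharWedgeAux

/-- The full cycle partition of a permutation of `Fin d`, as a `Nat.Partition d`. -/
def gpart {d : ℕ} (σ : Equiv.Perm (Fin d)) : Nat.Partition d where
  parts := partsM σ
  parts_pos := by
    intro n hn
    rw [partsM] at hn
    rcases Multiset.mem_add.1 hn with h | h
    · exact lt_of_lt_of_le zero_lt_two (Equiv.Perm.two_le_of_mem_cycleType h)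
    · rw [Multiset.eq_of_mem_replicate h]; exact zero_lt_one
  parts_sum := by
    rw [partsM, Multiset.sum_add, Equiv.Perm.sum_cycleType, Multiset.sum_replicate,
      smul_eq_mul, mul_one, Fintype.card_fin]
    have h1 := Finset.card_le_univ σ.support
    rw [Fintype.card_fin] at h1
    omega

theorem filter_partsM {d : ℕ} (σ : Equiv.Perm (Fin d)) :
    (partsM σ).filter (fun r => 2 ≤ r) = σ.cycleType := by
  rw [partsM, Multiset.filter_add,
    Multiset.filter_eq_self.2 (fun a ha => Equiv.Perm.two_le_of_mem_cycleType ha),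
    Multiset.filter_eq_nil.2 (fun a ha => by rw [Multiset.eq_of_mem_replicate ha]; decide),
    add_zero]

theorem gpart_eq_iff {d : ℕ} (σ : Equiv.Perm (Fin d)) (α : Nat.Partition d) :
    gpart σ = α ↔ σ.cycleType = α.parts.filter (fun r => 2 ≤ r) := by
  constructor
  · rintro rfl
    exact (filter_partsM σ).symm
  · intro h
    have hsplit := Multiset.filter_add_not (fun r => 2 ≤ r) α.parts
    have hone : α.parts.filter (fun r => ¬ 2 ≤ r)
        = Multiset.replicate (Multiset.card (α.parts.filter (fun r => ¬ 2 ≤ r))) 1 := by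
      rw [Multiset.eq_replicate_card]
      intro b hb
      have hb1 := Multiset.mem_filter.1 hb
      have hpos := α.parts_pos hb1.1
      have := hb1.2
      omega
    have hsum : (α.parts.filter (fun r => 2 ≤ r)).sum
        + (α.parts.filter (fun r => ¬ 2 ≤ r)).sum = d := by
      rw [← Multiset.sum_add, hsplit, α.parts_sum]
    rw [← h, Equiv.Perm.sum_cycleType, hone, Multiset.sum_replicate, smul_eq_mul,
      mul_one] at hsum
    have hparts : partsM σ = α.parts := by
      rw [partsM, ← hsplit, ← h, hone]
      congr 2
      rw [Fintype.card_fin]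
      omega
    exact Nat.Partition.ext hparts
  
theorem sign_eq_pow {d : ℕ} {R : Type*} [CommRing R] (σ : Equiv.Perm (Fin d))
    (α : Nat.Partition d) (h : gpart σ = α) :
    ((Equiv.Perm.sign σ : ℤ) : R) = (-1 : R) ^ (d - Multiset.card α.parts) := by
  have hs := Equiv.Perm.sign_of_cycleType σ
  set a := σ.cycleType.sum with ha
  set c := Multiset.card σ.cycleType with hc
  have hca : c ≤ a := by
    have h2 : Multiset.card σ.cycleType • 1 ≤ σ.cycleType.sum :=
      Multiset.card_nsmul_le_sum
        (fun x hx => le_trans one_le_two (Equiv.Perm.two_le_of_mem_cycleType hx))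
    simpa using h2
  have hb : a = σ.support.card := by rw [ha, Equiv.Perm.sum_cycleType]
  have hbd : a ≤ d := by
    have h1 := Finset.card_le_univ σ.support
    rw [Fintype.card_fin] at h1
    omega
  have hparts : Multiset.card α.parts = c + (d - a) := by
    rw [← h]
    show Multiset.card (partsM σ) = _
    rw [partsM, Multiset.card_add, Multiset.card_replicate, Fintype.card_fin, hb]
  have hz : ((Equiv.Perm.sign σ : ℤ)) = (-1 : ℤ) ^ (a + c) := by rw [hs]; simp
  rw [hz]
  have hexp : a + c = (d - Multiset.card α.parts) + 2 * c := by omega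
  rw [hexp]
  push_cast
  rw [pow_add, pow_mul]
  norm_num

theorem dnum_eq (d : ℕ) (α : Nat.Partition d) :
    Dnum d α
      = ((Finset.univ : Finset (Equiv.Perm (Fin d))).filter
          (fun σ => gpart σ = α)).card := by
  unfold Dnum
  congr 1
  apply Finset.filter_congr
  intro σ _
  exact (gpart_eq_iff σ α).symm

theorem hkPow_eq (m k r : ℕ) :
    hkPow m k r = ∑ c ∈ Finset.Nat.antidiagonalTuple m k, monom m c ^ r := by
  unfold hkPow monom
  refine Finset.sum_congr rfl fun c _ => ?_
  rw [← Finset.prod_pow]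
  exact Finset.prod_congr rfl fun j _ => by rw [← pow_mul, Nat.mul_comm]

end Assembly

open CharWedgeAux in
theorem character_wedge_power' (d k m : ℕ) :
    (d.factorial : MvPolynomial (Fin m) ℤ) * charW d k m
      = ∑ α : Nat.Partition d, (-1 : MvPolynomial (Fin m) ℤ) ^ (d - α.parts.card) *
          (Dnum d α : MvPolynomial (Fin m) ℤ) *
          (α.parts.map (fun r => hkPow m k r)).prod := by
  classical
  have hmain := perm_sum (X := Fin d) (R := MvPolynomial (Fin m) ℤ)
      (Finset.Nat.antidiagonalTuple m k) (monom m)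
  rw [Fintype.card_fin] at hmain
  simp only [← hkPow_eq] at hmain
  rw [show charW d k m = ∑ t ∈ (Finset.Nat.antidiagonalTuple m k).powersetCard d,
        ∏ i ∈ t, monom m i from rfl]
  rw [← hmain]
  rw [← Finset.sum_fiberwise Finset.univ gpart
    (fun σ => ((Equiv.Perm.sign σ : ℤ) : MvPolynomial (Fin m) ℤ)
      * ((partsM σ).map (fun r => hkPow m k r)).prod)]
  refine Finset.sum_congr rfl fun α _ => ?_
  have hterm : ∀ σ ∈ Finset.univ.filter (fun σ => gpart σ = α),
      ((Equiv.Perm.sign σ : ℤ) : MvPolynomial (Fin m) ℤ)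
        * ((partsM σ).map (fun r => hkPow m k r)).prod
      = (-1 : MvPolynomial (Fin m) ℤ) ^ (d - Multiset.card α.parts)
        * (α.parts.map (fun r => hkPow m k r)).prod := by
    intro σ hσ
    have hg : gpart σ = α := (Finset.mem_filter.1 hσ).2
    have hparts : partsM σ = α.parts := congrArg Nat.Partition.parts hg
    rw [hparts, sign_eq_pow σ α hg]
  rw [Finset.sum_congr rfl hterm, Finset.sum_const, dnum_eq, nsmul_eq_mul]
  ring

/-- The character of `Λ^d(S^k W)`:
`d! · e_d(m₁,…,m_N) = Σ_{α ⊢ d} (−1)^{d−ℓ(α)} D_α ∏_i h_k(x^{α_i})`. -/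
theorem character_wedge_power (d k m : ℕ) (hd : 1 ≤ d) (hm : 1 ≤ m) :
    (d.factorial : MvPolynomial (Fin m) ℤ) * charW d k m
      = ∑ α : Nat.Partition d, (-1 : MvPolynomial (Fin m) ℤ) ^ (d - α.parts.card) *
          (Dnum d α : MvPolynomial (Fin m) ℤ) *
          (α.parts.map (fun r => hkPow m k r)).prod :=
  character_wedge_power' d k m
end
end

section
/- Let α = (α₁,…,α_a) be a sequence of positive integers, k ≥ 0, m ≥ 1, and μ ∈ ℕ^m. Then the coefficient of the monomial ∏_{j=1}^{m} x_j^{μ_j + m − j} in Δ(x) · ∏_{i=1}^{a} h_k(x₁^{α_i},…,x_m^{α_i}) equals Σ_{π ∈ S_m} sgn(π) · N_α(k; (μ_j + π(j) − j)_{j=1}^{m}). -/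
open MvPolynomial Finset

noncomputable section

lemma prod_pairs {M : Type*} [CommMonoid M] {m : ℕ} (f : Fin m → Fin m → M) :
    ∏ p ∈ (Finset.univ : Finset (Fin m × Fin m)).filter (fun p => p.1 < p.2), f p.1 p.2
      = ∏ i, ∏ j ∈ Finset.Ioi i, f i j := by
  rw [Finset.prod_sigma']
  exact Finset.prod_nbij' (fun p => ⟨p.1, p.2⟩) (fun x => (x.1, x.2))
    (by simp [Finset.mem_sigma]) (by simp [Finset.mem_sigma]) (by simp) (by simp) (by simp)

lemma vand_eq_det (m : ℕ) :
    vand m = (Matrix.of fun i j : Fin m =>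
        (X j ^ ((Fin.rev i : ℕ)) : MvPolynomial (Fin m) ℤ)).det := by
  have h1 : (Matrix.of fun i j : Fin m =>
        (X j ^ ((Fin.rev i : ℕ)) : MvPolynomial (Fin m) ℤ))
      = ((Matrix.vandermonde (fun i : Fin m =>
          (X (Fin.rev i) : MvPolynomial (Fin m) ℤ))).transpose).submatrix
            Fin.revPerm Fin.revPerm := by
    ext i j
    simp [Matrix.vandermonde]
  rw [h1, Matrix.det_submatrix_equiv_self, Matrix.det_transpose, Matrix.det_vandermonde]
  rw [vand, ← prod_pairs (fun i j => (X (Fin.rev j) - X (Fin.rev i) : MvPolynomial (Fin m) ℤ))]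
  exact Finset.prod_nbij' (fun p => (Fin.rev p.2, Fin.rev p.1)) (fun p => (Fin.rev p.2, Fin.rev p.1))
    (by simp) (by simp) (by simp) (by simp) (by simp)

lemma prodXPow_eq_monomial {m : ℕ} (g : Fin m → ℕ) :
    (∏ j, X j ^ g j : MvPolynomial (Fin m) ℤ)
      = monomial (Finsupp.equivFunOnFinite.symm g) 1 := by
  rw [monomial_eq, C_1, one_mul, Finsupp.prod_fintype]
  · simp
  · intro i; exact pow_zero _

lemma coeffOf_prodXPow {m : ℕ} (e g : Fin m → ℕ) :
    coeffOf e (∏ j, X j ^ g j : MvPolynomial (Fin m) ℤ)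
      = if g = e then 1 else 0 := by
  rw [coeffOf, prodXPow_eq_monomial, coeff_monomial]
  congr 1
  simp [EmbeddingLike.apply_eq_iff_eq]

lemma prod_hkPow_expand {a m : ℕ} (α : Fin a → ℕ) (k : ℕ) :
    (∏ i, hkPow m k (α i))
      = ∑ M ∈ Fintype.piFinset (fun _ : Fin a => Finset.Nat.antidiagonalTuple m k),
          ∏ j, (X j : MvPolynomial (Fin m) ℤ) ^ (∑ i, α i * M i j) := by
  simp only [hkPow]
  rw [Finset.prod_univ_sum]
  refine Finset.sum_congr rfl fun M _ => ?_
  rw [Finset.prod_comm]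
  exact Finset.prod_congr rfl fun j _ => Finset.prod_pow_eq_pow_sum _ _ _

lemma card_filter_eq_Nmat {a m : ℕ} (α : Fin a → ℕ) (k : ℕ) (μ : Fin m → ℕ)
    (σ : Equiv.Perm (Fin m)) :
    (((Fintype.piFinset fun _ : Fin a => Finset.Nat.antidiagonalTuple m k)).filter
        (fun M : Fin a → Fin m → ℕ =>
          (fun j => (Fin.rev (σ j) : ℕ) + ∑ i, α i * M i j)
            = fun j : Fin m => μ j + (m - 1 - (j : ℕ)))).card
      = Nmat α k (fun j : Fin m => (μ j : ℤ) + ((σ j : ℕ) : ℤ) - ((j : ℕ) : ℤ)) := by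
  rw [Nmat, ← Set.ncard_coe_finset]
  congr 1
  ext M
  simp only [Finset.coe_filter, Set.mem_setOf_eq, Fintype.mem_piFinset,
    Finset.Nat.mem_antidiagonalTuple, funext_iff]
  constructor
  · rintro ⟨h1, h2⟩
    refine ⟨h1, fun j => ?_⟩
    have hj := h2 j
    have hσ : (σ j : ℕ) < m := (σ j).isLt
    have hjm : (j : ℕ) < m := j.isLt
    have hc : (↑(∑ i, α i * M i j) : ℤ) = ∑ i, (α i : ℤ) * (M i j : ℤ) := by push_cast; rfl
    rw [Fin.val_rev] at hj
    rw [← hc]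
    omega
  · rintro ⟨h1, h2⟩
    refine ⟨h1, fun j => ?_⟩
    have hj := h2 j
    have hσ : (σ j : ℕ) < m := (σ j).isLt
    have hjm : (j : ℕ) < m := j.isLt
    have hc : (↑(∑ i, α i * M i j) : ℤ) = ∑ i, (α i : ℤ) * (M i j : ℤ) := by push_cast; rfl
    rw [← hc] at hj
    rw [Fin.val_rev]
    omega

/-- The coefficient of `∏_j x_j^{μ_j + m − j}` in `Δ(x)·∏_i h_k(x^{α_i})` is the signed
sum `Σ_{π ∈ S_m} sgn(π) N_α(k; (μ_j + π(j) − j)_j)`. -/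
theorem coeff_vand_mul_prod_hkPow {a m : ℕ} (hm : 1 ≤ m)
    (α : Fin a → ℕ) (hα : ∀ i, 0 < α i) (k : ℕ) (μ : Fin m → ℕ) :
    coeffOf (fun j : Fin m => μ j + (m - 1 - (j : ℕ)))
        (vand m * ∏ i, hkPow m k (α i))
      = ∑ π : Equiv.Perm (Fin m), (Equiv.Perm.sign π : ℤ) *
          (Nmat α k
            (fun j : Fin m => (μ j : ℤ) + ((π j : ℕ) : ℤ) - ((j : ℕ) : ℤ)) : ℤ) := by
  rw [vand_eq_det, Matrix.det_apply, prod_hkPow_expand, Finset.sum_mul_sum]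
  simp only [smul_mul_assoc, Matrix.of_apply]
  have key : ∀ σ : Equiv.Perm (Fin m),
      ∀ M ∈ Fintype.piFinset (fun _ : Fin a => Finset.Nat.antidiagonalTuple m k),
      (∏ i, (X i : MvPolynomial (Fin m) ℤ) ^ ((Fin.rev (σ i) : ℕ))) *
        ∏ j, (X j : MvPolynomial (Fin m) ℤ) ^ (∑ i, α i * M i j)
      = ∏ j, (X j : MvPolynomial (Fin m) ℤ) ^ ((Fin.rev (σ j) : ℕ) + ∑ i, α i * M i j) := by
    intro σ M _
    rw [← Finset.prod_mul_distrib]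
    exact Finset.prod_congr rfl fun j _ => (pow_add _ _ _).symm
  rw [show (coeffOf (fun j : Fin m => μ j + (m - 1 - (j : ℕ)))) =
      (fun P => MvPolynomial.coeff
        (Finsupp.equivFunOnFinite.symm (fun j : Fin m => μ j + (m - 1 - (j : ℕ)))) P) from rfl]
  simp only [MvPolynomial.coeff_sum]
  refine Finset.sum_congr rfl fun σ _ => ?_
  rw [Finset.sum_congr rfl (fun M hM => by rw [key σ M hM])]
  simp only [MvPolynomial.coeff_smul]
  have : ∀ M ∈ Fintype.piFinset (fun _ : Fin a => Finset.Nat.antidiagonalTuple m k),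
      MvPolynomial.coeff (Finsupp.equivFunOnFinite.symm (fun j : Fin m => μ j + (m - 1 - (j : ℕ))))
        (∏ j, (X j : MvPolynomial (Fin m) ℤ) ^ ((Fin.rev (σ j) : ℕ) + ∑ i, α i * M i j))
      = if (fun j => (Fin.rev (σ j) : ℕ) + ∑ i, α i * M i j)
          = (fun j : Fin m => μ j + (m - 1 - (j : ℕ))) then 1 else 0 := fun M _ =>
    coeffOf_prodXPow _ _
  rw [Finset.sum_congr rfl (fun M hM => by rw [this M hM])]
  rw [← Finset.smul_sum, Finset.sum_boole, ← card_filter_eq_Nmat α k μ σ]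
  rw [Units.smul_def, zsmul_eq_mul]
  rfl
end
end

section
/- Let α₁,…,α_a be positive integers (a ≥ 1), let k > 0 be a real number, l ≥ 1, and λ ∈ ℝ^l. Consider the polytope P_{α,λ} = { M ∈ ℝ^{a×l} : M_{ij} ≥ 0 for all i,j; Σ_{j=1}^{l} M_{ij} = k for every row i; Σ_{i=1}^{a} α_i M_{ij} = λ_j for every column j }. If P_{α,λ} contains a matrix all of whose entries are strictly positive, then the dimension of the affine span of P_{α,λ} equals (a−1)(l−1). -/
open MvPolynomial Finset

noncomputable section

/-!
The strictly positive matrix `M₀` lies in the interior of the nonnegative orthant, so near `M₀`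
the polytope fills the affine subspace cut out by the row and column conditions; hence the
polytope spans that subspace, whose direction is the kernel of the marginal map
`L : ℝ^{a×l} → ℝ^a × ℝ^l`. The image of `L` is the whole hyperplane
`∑ i, α i r i = ∑ j, c j` (spread `r` evenly over the columns and correct each column by a
multiple of the weights), so `rank L = a + l - 1` and
`dim ker L = a l - (a + l - 1) = (a - 1)(l - 1)`.
-/

open Topology

section AffineSpan

variable {𝕜 E F : Type*} [NontriviallyNormedField 𝕜] [AddCommGroup E] [Module 𝕜 E]
  [TopologicalSpace E] [ContinuousAdd E] [ContinuousSMul 𝕜 E] [AddCommGroup F] [Module 𝕜 F]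

theorem direction_affineSpan_eq_ker_of_mem_nhds (f : E →ₗ[𝕜] F) {s t : Set E} {p : E}
    (ht : t ∈ 𝓝 p) (hts : t ∩ f ⁻¹' {f p} ⊆ s) (hs : s ⊆ f ⁻¹' {f p}) :
    (affineSpan 𝕜 s).direction = LinearMap.ker f := by
  rw [direction_affineSpan]
  refine le_antisymm ?_ fun v hv => ?_
  · rw [vectorSpan_def, Submodule.span_le]
    rintro _ ⟨x, hx, y, hy, rfl⟩
    show f (x - y) = 0
    rw [map_sub, (hs hx : f x = f p), (hs hy : f y = f p), sub_self]
  · have hline : Filter.Tendsto (fun c : 𝕜 => p + c • v) (𝓝[≠] 0) (𝓝 p) :=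
      ((continuous_const.add (continuous_id.smul continuous_const)).tendsto' 0 p
        (by simp)).mono_left nhdsWithin_le_nhds
    obtain ⟨c, hct, hc⟩ := ((hline.eventually ht).and self_mem_nhdsWithin).exists
    have hcs : p + c • v ∈ s :=
      hts ⟨hct, by simp [LinearMap.mem_ker.1 hv]⟩
    have hpt : p ∈ s := hts ⟨mem_of_mem_nhds ht, rfl⟩
    have hcv : c • v ∈ vectorSpan 𝕜 s := by
      simpa using vsub_mem_vectorSpan 𝕜 hcs hpt
    exact (Submodule.smul_mem_iff _ hc).1 hcv

end AffineSpan

section Marginals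

variable {K ι κ : Type*} [Field K] [Fintype ι] [Fintype κ]

def marginals (w : ι → K) : (ι → κ → K) →ₗ[K] (ι → K) × (κ → K) where
  toFun M := (fun i => ∑ j, M i j, fun j => ∑ i, w i * M i j)
  map_add' M N := by ext <;> simp [sum_add_distrib, mul_add]
  map_smul' c M := by ext <;> simp [mul_sum, mul_left_comm]

theorem marginals_apply (w : ι → K) (M : ι → κ → K) :
    marginals w M = (fun i => ∑ j, M i j, fun j => ∑ i, w i * M i j) := rfl

def massDefect (w : ι → K) : (ι → K) × (κ → K) →ₗ[K] K where
  toFun p := ∑ i, w i * p.1 i - ∑ j, p.2 j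
  map_add' p q := by
    simp only [Prod.fst_add, Prod.snd_add, Pi.add_apply, mul_add, sum_add_distrib]
    ring
  map_smul' c p := by simp [mul_sum, mul_sub, mul_left_comm]

theorem massDefect_comp_marginals (w : ι → K) :
    (massDefect (κ := κ) w).comp (marginals w) = 0 := by
  ext M
  simp only [LinearMap.comp_apply, massDefect, marginals, LinearMap.coe_mk, AddHom.coe_mk,
    LinearMap.zero_apply, mul_sum, sub_eq_zero]
  exact sum_comm

theorem massDefect_ne_zero {w : ι → K} (hw : ∑ i, w i ≠ 0) :
    massDefect (κ := κ) w ≠ 0 := by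
  classical
  obtain ⟨i, -, hi⟩ := exists_ne_zero_of_sum_ne_zero hw
  intro h
  have := LinearMap.congr_fun h (Pi.single i 1, 0)
  simp [massDefect, Pi.single_apply, hi] at this

theorem range_marginals [CharZero K] [Nonempty κ] {w : ι → K} (hw : ∑ i, w i ≠ 0) :
    LinearMap.range (marginals (κ := κ) w) = LinearMap.ker (massDefect w) := by
  refine le_antisymm (LinearMap.range_le_ker_iff.2 (massDefect_comp_marginals w)) ?_
  rintro ⟨r, c⟩ hrc
  have hmass : ∑ i, w i * r i = ∑ j, c j := sub_eq_zero.1 hrc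
  have hn : (Fintype.card κ : K) ≠ 0 := Nat.cast_ne_zero.2 Fintype.card_ne_zero
  refine
    ⟨fun i j => r i / Fintype.card κ + (c j - (∑ j, c j) / Fintype.card κ) / ∑ i, w i, ?_⟩
  rw [marginals_apply, Prod.mk.injEq]
  constructor <;> funext x
  · simp only [sum_add_distrib, sum_const, card_univ, nsmul_eq_mul, ← sum_div,
      sum_sub_distrib]
    field_simp
    ring
  · simp only [mul_add, ← mul_div_assoc, sum_add_distrib, ← sum_div, hmass, ← sum_mul]
    field_simp
    ring

theorem finrank_range_marginals [CharZero K] [Nonempty κ] {w : ι → K} (hw : ∑ i, w i ≠ 0) :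
    Module.finrank K (LinearMap.range (marginals (κ := κ) w)) =
      Fintype.card ι + Fintype.card κ - 1 := by
  have h := Module.Dual.finrank_ker_add_one_of_ne_zero (massDefect_ne_zero (κ := κ) hw)
  rw [Module.finrank_prod, Module.finrank_fintype_fun_eq_card,
    Module.finrank_fintype_fun_eq_card] at h
  rw [range_marginals hw]
  omega

theorem finrank_ker_marginals [LinearOrder K] [IsStrictOrderedRing K] {w : ι → K}
    (hw : ∀ i, 0 < w i) :
    Module.finrank K (LinearMap.ker (marginals (κ := κ) w)) =
      (Fintype.card ι - 1) * (Fintype.card κ - 1) := by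
  rcases isEmpty_or_nonempty ι with hι | hι
  · simp [Module.finrank_zero_of_subsingleton]
  rcases isEmpty_or_nonempty κ with hκ | hκ
  · simp [Module.finrank_zero_of_subsingleton]
  have hw' : ∑ i, w i ≠ 0 := (sum_pos (fun i _ => hw i) univ_nonempty).ne'
  have h := (marginals (κ := κ) w).finrank_range_add_finrank_ker
  rw [finrank_range_marginals hw', Module.finrank_pi_fintype] at h
  simp only [Module.finrank_fintype_fun_eq_card, sum_const, card_univ, smul_eq_mul] at h
  obtain ⟨m, hm⟩ := Nat.exists_eq_add_one_of_ne_zero (Fintype.card_ne_zero (α := ι))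
  obtain ⟨n, hn⟩ := Nat.exists_eq_add_one_of_ne_zero (Fintype.card_ne_zero (α := κ))
  rw [hm, hn, Nat.add_sub_cancel, Nat.add_sub_cancel]
  rw [hm, hn, add_one_mul, mul_add_one] at h
  omega

end Marginals

theorem isOpen_setOf_forall_pos {ι κ : Type*} [Finite ι] [Finite κ] :
    IsOpen {M : ι → κ → ℝ | ∀ i j, 0 < M i j} := by
  simp only [Set.ofPred_forall]
  exact isOpen_iInter_of_finite fun i => isOpen_iInter_of_finite fun j =>
    isOpen_lt continuous_const ((continuous_apply j).comp (continuous_apply i))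

theorem matrix_polytope_dimension_general (a l : ℕ)
    (α : Fin a → ℕ) (hα : ∀ i, 0 < α i) (k : ℝ) (lam : Fin l → ℝ)
    (hpos : ∃ M : Fin a → Fin l → ℝ,
      ((∀ i j, 0 ≤ M i j) ∧ (∀ i, ∑ j, M i j = k) ∧
        (∀ j, ∑ i, (α i : ℝ) * M i j = lam j)) ∧ (∀ i j, 0 < M i j)) :
    Module.finrank ℝ
        (affineSpan ℝ {M : Fin a → Fin l → ℝ |
          (∀ i j, 0 ≤ M i j) ∧ (∀ i, ∑ j, M i j = k) ∧
          (∀ j, ∑ i, (α i : ℝ) * M i j = lam j)}).direction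
      = (a - 1) * (l - 1) := by
  obtain ⟨M₀, hM₀, hM₀pos⟩ := hpos
  have hfibre : ∀ M : Fin a → Fin l → ℝ, marginals (fun i => (α i : ℝ)) M =
      marginals (fun i => (α i : ℝ)) M₀ ↔ (∀ i, ∑ j, M i j = k) ∧
        ∀ j, ∑ i, (α i : ℝ) * M i j = lam j := by
    intro M
    simp [marginals_apply, funext_iff, hM₀.2.1, hM₀.2.2]
  rw [direction_affineSpan_eq_ker_of_mem_nhds (marginals fun i => (α i : ℝ))
      (isOpen_setOf_forall_pos.mem_nhds hM₀pos) ?_ ?_,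
    finrank_ker_marginals fun i => Nat.cast_pos.2 (hα i), Fintype.card_fin, Fintype.card_fin]
  · exact fun M hM => ⟨fun i j => (hM.1 i j).le, (hfibre M).1 hM.2⟩
  · exact fun M hM => (hfibre M).2 hM.2

/-- If the polytope of nonnegative `a × l` matrices with row sums `k` and `α`-weighted
column sums `λ` contains a strictly positive matrix, then its dimension (the dimension of
its affine span) is `(a−1)(l−1)`. -/
theorem matrix_polytope_dimension (a l : ℕ) (ha : 1 ≤ a) (hl : 1 ≤ l)
    (α : Fin a → ℕ) (hα : ∀ i, 0 < α i) (k : ℝ) (hk : 0 < k) (lam : Fin l → ℝ)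
    (hpos : ∃ M : Fin a → Fin l → ℝ,
      ((∀ i j, 0 ≤ M i j) ∧ (∀ i, ∑ j, M i j = k) ∧
        (∀ j, ∑ i, (α i : ℝ) * M i j = lam j)) ∧ (∀ i j, 0 < M i j)) :
    Module.finrank ℝ
        (affineSpan ℝ {M : Fin a → Fin l → ℝ |
          (∀ i j, 0 ≤ M i j) ∧ (∀ i, ∑ j, M i j = k) ∧
          (∀ j, ∑ i, (α i : ℝ) * M i j = lam j)}).direction
      = (a - 1) * (l - 1) :=
  matrix_polytope_dimension_general a l α hα k lam hpos
end
end
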